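/- Let a, b > 0 with b/a > 5/12, let μ > 0, and give three bodies equal masses μ_1 = μ_2 = μ_3 = μ. Then there exist x > 0 and y > 0 such that the points p_1 = (x, 0), p_2 = (−x/2, y), p_3 = (−x/2, −y) satisfy the anisotropic central configuration equations (for every i, a x_i = Σ_{j≠i} μ_j (x_i − x_j)/r_{ij}³ and b y_i = Σ_{j≠i} μ_j (y_i − y_j)/r_{ij}³, where r_{ij} = |p_i − p_j|). This configuration is an isosceles triangle symmetric with respect to the x-axis whose side length s = |p_1 − p_2| = |p_1 − p_3| equals (3μ/a)^{1/3} and whose base length r = |p_2 − p_3| = 2y equals (2μ/(b − a/3))^{1/3}. -/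
import Mathlib


open Finset

abbrev E2 : Type := EuclideanSpace ℝ (Fin 2)

/-- The anisotropic central configuration equations for points `p_i = (x_i, y_i)`:
`a x_i = Σ_{j≠i} μ_j (x_i − x_j)/r_{ij}³` and `b y_i = Σ_{j≠i} μ_j (y_i − y_j)/r_{ij}³`. -/
def AnisoCC {k : ℕ} (a b : ℝ) (μ : Fin k → ℝ) (p : Fin k → E2) : Prop :=
  ∀ i, (a * p i 0 = ∑ j ∈ Finset.univ.filter (· ≠ i), μ j * (p i 0 - p j 0) / ‖p i - p j‖ ^ 3) ∧
       (b * p i 1 = ∑ j ∈ Finset.univ.filter (· ≠ i), μ j * (p i 1 - p j 1) / ‖p i - p j‖ ^ 3)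

/-- The point `(a, b)` of the Euclidean plane. -/
noncomputable def pt (a b : ℝ) : E2 := (WithLp.equiv 2 (Fin 2 → ℝ)).symm ![a, b]

lemma pt_apply_zero (u v : ℝ) : pt u v 0 = u := rfl
lemma pt_apply_one (u v : ℝ) : pt u v 1 = v := rfl

lemma norm_pt_sub (u v u' v' : ℝ) :
    ‖pt u v - pt u' v'‖ = Real.sqrt ((u - u') ^ 2 + (v - v') ^ 2) := by
  rw [EuclideanSpace.norm_eq]
  simp [pt, Fin.sum_univ_two, sq_abs]

lemma filter0 : (Finset.univ.filter (· ≠ (0 : Fin 3))) = {1, 2} := by decide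
lemma filter1 : (Finset.univ.filter (· ≠ (1 : Fin 3))) = {0, 2} := by decide
lemma filter2 : (Finset.univ.filter (· ≠ (2 : Fin 3))) = {0, 1} := by decide

/-- for `a, b > 0` with `b/a > 5/12` and three equal masses `μ`, there is
an anisotropic central configuration forming an isosceles triangle symmetric with respect
to the `x`-axis, with side `s = (3μ/a)^{1/3}` and base `r = 2y = (2μ/(b − a/3))^{1/3}`. -/
theorem stmt16 (a b μ : ℝ) (ha : 0 < a) (hb : 0 < b) (hba : 5 / 12 < b / a) (hμ : 0 < μ) :
    ∃ x > (0 : ℝ), ∃ y > (0 : ℝ),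
      AnisoCC a b (fun _ : Fin 3 => μ) ![pt x 0, pt (-x / 2) y, pt (-x / 2) (-y)] ∧
      ‖pt x 0 - pt (-x / 2) y‖ = (3 * μ / a) ^ ((1 : ℝ) / 3) ∧
      ‖pt x 0 - pt (-x / 2) (-y)‖ = (3 * μ / a) ^ ((1 : ℝ) / 3) ∧
      ‖pt (-x / 2) y - pt (-x / 2) (-y)‖ = 2 * y ∧
      2 * y = (2 * μ / (b - a / 3)) ^ ((1 : ℝ) / 3) := by
  have h512 : 5 / 12 * a < b := (lt_div_iff₀ ha).mp hba
  have hba' : 0 < b - a / 3 := by nlinarith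
  set s : ℝ := (3 * μ / a) ^ ((1 : ℝ) / 3) with hs_def
  set r : ℝ := (2 * μ / (b - a / 3)) ^ ((1 : ℝ) / 3) with hr_def
  have hs : 0 < s := Real.rpow_pos_of_pos (by positivity) _
  have hr : 0 < r := Real.rpow_pos_of_pos (by positivity) _
  have hs3 : s ^ 3 = 3 * μ / a := by
    rw [hs_def, ← Real.rpow_natCast _ 3, ← Real.rpow_mul (by positivity)]
    norm_num
  have hr3 : r ^ 3 = 2 * μ / (b - a / 3) := by
    rw [hr_def, ← Real.rpow_natCast _ 3, ← Real.rpow_mul (by positivity)]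
    norm_num
  -- r < 2 s
  have hr2s : r < 2 * s := by
    have h3 : r ^ 3 < (2 * s) ^ 3 := by
      rw [hr3, mul_pow, hs3, show (2:ℝ) ^ 3 * (3 * μ / a) = 24 * μ / a by ring,
        div_lt_div_iff₀ hba' ha]
      nlinarith
    exact lt_of_pow_lt_pow_left₀ 3 (by positivity) h3
  have hsy : (r / 2) ^ 2 < s ^ 2 := by
    apply pow_lt_pow_left₀ _ (by positivity)
    · norm_num
    · linarith
  set y : ℝ := r / 2 with hy_def
  have hy : 0 < y := by positivity
  set x : ℝ := 2 / 3 * Real.sqrt (s ^ 2 - y ^ 2) with hx_def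
  have hx : 0 < x := by
    have : 0 < s ^ 2 - y ^ 2 := by linarith
    positivity
  have hx2 : (3 * x / 2) ^ 2 = s ^ 2 - y ^ 2 := by
    rw [hx_def]
    rw [show 3 * (2 / 3 * Real.sqrt (s ^ 2 - y ^ 2)) / 2 = Real.sqrt (s ^ 2 - y ^ 2) by ring]
    exact Real.sq_sqrt (by linarith)
  -- distances
  have d12 : ‖pt x 0 - pt (-x / 2) y‖ = s := by
    rw [norm_pt_sub]
    rw [show (x - -x / 2) ^ 2 + (0 - y) ^ 2 = (3 * x / 2) ^ 2 + y ^ 2 by ring, hx2]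
    rw [show s ^ 2 - y ^ 2 + y ^ 2 = s ^ 2 by ring]
    exact Real.sqrt_sq hs.le
  have d13 : ‖pt x 0 - pt (-x / 2) (-y)‖ = s := by
    rw [norm_pt_sub]
    rw [show (x - -x / 2) ^ 2 + (0 - -y) ^ 2 = (3 * x / 2) ^ 2 + y ^ 2 by ring, hx2]
    rw [show s ^ 2 - y ^ 2 + y ^ 2 = s ^ 2 by ring]
    exact Real.sqrt_sq hs.le
  have d23 : ‖pt (-x / 2) y - pt (-x / 2) (-y)‖ = 2 * y := by
    rw [norm_pt_sub]
    rw [show (-x / 2 - -x / 2) ^ 2 + (y - -y) ^ 2 = (2 * y) ^ 2 by ring]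
    exact Real.sqrt_sq (by positivity)
  have d21 : ‖pt (-x / 2) y - pt x 0‖ = s := by
    rw [norm_sub_rev]; exact d12
  have d31 : ‖pt (-x / 2) (-y) - pt x 0‖ = s := by
    rw [norm_sub_rev]; exact d13
  have d32 : ‖pt (-x / 2) (-y) - pt (-x / 2) y‖ = 2 * y := by
    rw [norm_sub_rev]; exact d23
  have hsne : s ≠ 0 := hs.ne'
  have hyne : y ≠ 0 := hy.ne'
  have h2y3 : (2 * y) ^ 3 = 2 * μ / (b - a / 3) := by
    rw [show 2 * y = r by rw [hy_def]; ring]; exact hr3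
  refine ⟨x, hx, y, hy, ?_, d12, d13, d23, by rw [hy_def]; ring⟩
  intro i
  fin_cases i <;> constructor <;>
    (simp only [Fin.mk_zero, Fin.mk_one, Fin.reduceFinMk, Fin.isValue,
        Matrix.cons_val_zero, Matrix.cons_val_one, Matrix.head_cons,
        Matrix.cons_val_two, Matrix.tail_cons, filter0, filter1, filter2,
        Finset.sum_insert, Finset.mem_singleton, Fin.reduceEq, not_false_iff,
        Finset.sum_singleton, pt_apply_zero, pt_apply_one, d12, d13, d23, d21, d31, d32]
     first
     | ring1
     | (simp only [hs3, h2y3]; field_simp; ring1))
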